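/- arXiv:2508.05284 — 7 statements merged into one kernel-verified Lean document; each statement's English description precedes it below -/
import Mathlib

section
/- Let Λ ∈ F_q[x] split completely over F_q with root set Z(Λ) and multiplicities ν_α(Λ). Then Σ_{η | Λ} q^{deg(Λ/η)} · ∏_{α ∈ Z(Λ/η)} (1 − 1/q)/(1 − 1/q^ℓ) = q^{deg Λ} · ∏_{α ∈ Z(Λ)} (1 − q^{−(ℓ+ν_α(Λ))})/(1 − q^{−ℓ}), where the sum is over monic divisors η of Λ. -/
open Polynomial


-- per-root algebra lemma
lemma geom_step (Q : ℝ) (hQ : 2 ≤ Q) (ℓ ν : ℕ) (hℓ : 1 ≤ ℓ) :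
    ∑ k ∈ Finset.range (ν + 1), Q ^ k * (if k = 0 then 1 else (1 - 1 / Q) / (1 - 1 / Q ^ ℓ))
      = Q ^ ν * ((1 - (Q ^ (ℓ + ν))⁻¹) / (1 - (Q ^ ℓ)⁻¹)) := by
  have hQ0 : (0:ℝ) < Q := by linarith
  have hQ1 : (1:ℝ) < Q := by linarith
  have hQn : Q ≠ 1 := ne_of_gt hQ1
  have hQl : (1:ℝ) < Q ^ ℓ := one_lt_pow₀ hQ1 (by omega)
  have hQl0 : Q ^ ℓ - 1 ≠ 0 := by linarith
  have hQ10 : Q - 1 ≠ 0 := by linarith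
  have hQν : (0:ℝ) < Q ^ ν := pow_pos hQ0 ν
  have hQlν : (0:ℝ) < Q ^ (ℓ + ν) := pow_pos hQ0 _
  rw [Finset.sum_range_succ']
  simp only [if_true, if_false, eq_self_iff_true, Nat.succ_ne_zero, pow_zero, one_mul,
    if_neg (Nat.succ_ne_zero _)]
  norm_num
  have hgeom : ∑ k ∈ Finset.range ν, Q ^ (k + 1) *
      ((1 - Q⁻¹) / (1 - (Q ^ ℓ)⁻¹)) =
      (∑ k ∈ Finset.range ν, Q ^ k) * (Q * ((1 - Q⁻¹) / (1 - (Q ^ ℓ)⁻¹))) := by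
    rw [Finset.sum_mul]
    refine Finset.sum_congr rfl fun k _ => by ring
  rw [hgeom, geom_sum_eq hQn]
  have hpow : Q ^ (ℓ + ν) = Q ^ ℓ * Q ^ ν := pow_add Q ℓ ν
  field_simp
  ring_nf

lemma sum_powerset_toFinset {F : Type*} [DecidableEq F] (R : Multiset F) (g : F → ℕ → ℝ) :
    ∑ t ∈ R.powerset.toFinset, ∏ a ∈ R.toFinset, g a (t.count a)
      = ∏ a ∈ R.toFinset, ∑ k ∈ Finset.range (R.count a + 1), g a k := by
  classical
  rw [Finset.prod_sum]
  have key : ∀ (p : ∀ a ∈ R.toFinset, ℕ) (b : F) (hb : b ∈ R.toFinset),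
      Multiset.count b (∑ a ∈ R.toFinset.attach, Multiset.replicate (p a.1 a.2) a.1)
        = p b hb := by
    intro p b hb
    rw [Multiset.count_sum']
    rw [Finset.sum_eq_single_of_mem (⟨b, hb⟩ : {x // x ∈ R.toFinset})
      (Finset.mem_attach _ _)]
    · simp [Multiset.count_replicate]
    · intro c _ hc
      rw [Multiset.count_replicate, if_neg fun h => hc (Subtype.ext h)]
  have key0 : ∀ (p : ∀ a ∈ R.toFinset, ℕ) (b : F), b ∉ R.toFinset →
      Multiset.count b (∑ a ∈ R.toFinset.attach, Multiset.replicate (p a.1 a.2) a.1)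
        = 0 := by
    intro p b hb
    rw [Multiset.count_sum']
    refine Finset.sum_eq_zero fun c _ => ?_
    rw [Multiset.count_replicate, if_neg fun h => hb (by rw [← h]; exact c.2)]
  refine Finset.sum_nbij' (fun t => fun a _ => t.count a)
    (fun p => ∑ a ∈ R.toFinset.attach, Multiset.replicate (p a.1 a.2) a.1)
    ?_ ?_ ?_ ?_ ?_
  · intro t ht
    rw [Multiset.mem_toFinset, Multiset.mem_powerset] at ht
    simp only [Finset.mem_pi, Finset.mem_range]
    intro a _
    exact Nat.lt_succ_of_le (Multiset.count_le_of_le a ht)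
  · intro p hp
    rw [Multiset.mem_toFinset, Multiset.mem_powerset, Multiset.le_iff_count]
    intro b
    by_cases hb : b ∈ R.toFinset
    · rw [key p b hb]
      simp only [Finset.mem_pi, Finset.mem_range] at hp
      exact Nat.lt_succ_iff.mp (hp b hb)
    · rw [key0 p b hb]
      exact Nat.zero_le _
  · intro t ht
    rw [Multiset.mem_toFinset, Multiset.mem_powerset] at ht
    dsimp only
    rw [Multiset.ext]
    intro b
    by_cases hb : b ∈ R.toFinset
    · exact key (fun a _ => t.count a) b hb
    · rw [key0 (fun a _ => t.count a) b hb]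
      symm
      rw [Multiset.count_eq_zero]
      exact fun hbt => hb (Multiset.mem_toFinset.mpr (Multiset.mem_of_le ht hbt))
  · intro p hp
    funext b hb
    exact key p b hb
  · intro t ht
    exact (Finset.prod_attach R.toFinset fun a => g a (t.count a)).symm
/-- `∑_{η | Λ} q^{deg(Λ/η)} ∏_{α ∈ Z(Λ/η)} (1 − 1/q)/(1 − 1/q^ℓ)
  = q^{deg Λ} ∏_{α ∈ Z(Λ)} (1 − q^{−(ℓ+ν_α(Λ))})/(1 − q^{−ℓ})`,
sum over monic divisors `η` of the split polynomial `Λ`. -/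
theorem sum_over_divisors_eq {F : Type*} [Field F] [Fintype F] [DecidableEq F]
    (q ℓ : ℕ) (hq : q = Fintype.card F) (hq1 : 2 ≤ q) (hℓ : 1 ≤ ℓ)
    (Λ : F[X]) (hΛ : Λ ≠ 0) (hsplit : (Λ.map (RingHom.id F)).Splits) :
    (∑ᶠ η ∈ {η : F[X] | η.Monic ∧ η ∣ Λ},
        (q : ℝ) ^ ((Λ / η).natDegree) *
          ∏ a ∈ (Λ / η).roots.toFinset, ((1 - 1 / (q : ℝ)) / (1 - 1 / (q : ℝ) ^ ℓ)))
      = (q : ℝ) ^ Λ.natDegree *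
          ∏ a ∈ Λ.roots.toFinset,
            ((1 - ((q : ℝ) ^ (ℓ + rootMultiplicity a Λ))⁻¹) / (1 - ((q : ℝ) ^ ℓ)⁻¹)) := by
  classical
  have hQ2 : (2:ℝ) ≤ (q:ℝ) := by exact_mod_cast hq1
  set Q : ℝ := (q : ℝ) with hQdef
  set r : ℝ := (1 - 1/Q) / (1 - 1/Q^ℓ) with hr
  set R := Λ.roots with hRdef
  have hc : Λ.leadingCoeff ≠ 0 := leadingCoeff_ne_zero.mpr hΛ
  have hprod : Λ = C Λ.leadingCoeff * (R.map fun a => X - C a).prod :=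
    (by simpa using hsplit : Λ.Splits).eq_prod_roots
  set P : Multiset F → F[X] := fun s => (s.map fun a => X - C a).prod with hPdef
  have hPmonic : ∀ s : Multiset F, (P s).Monic := fun s =>
    monic_multiset_prod_of_monic _ _ fun a _ => monic_X_sub_C a
  have hPdvd : ∀ s : Multiset F, s ≤ R → P s ∣ Λ := by
    intro s hs
    refine (Multiset.prod_dvd_prod_of_le (Multiset.map_le_map hs)).trans
      ⟨C Λ.leadingCoeff, ?_⟩
    conv_lhs => rw [hprod]
    ring
  have hdiv : ∀ s : Multiset F, s ≤ R → Λ / P s = C Λ.leadingCoeff * P (R - s) := by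
    intro s hs
    have h1 : Λ = P s * (C Λ.leadingCoeff * P (R - s)) := by
      have h2 : R = s + (R - s) := (add_tsub_cancel_of_le hs).symm
      conv_lhs => rw [hprod, h2]
      show C Λ.leadingCoeff * ((s + (R - s)).map fun a => X - C a).prod = _
      rw [Multiset.map_add, Multiset.prod_add]
      ring
    conv_lhs => rw [h1]
    rw [← divByMonic_eq_div _ (hPmonic s), mul_divByMonic_cancel_left _ (hPmonic s)]
  have hset : {η : F[X] | η.Monic ∧ η ∣ Λ} = ↑((R.powerset.toFinset).image P) := by
    ext η
    simp only [Set.mem_setOf_eq, Finset.coe_image, Set.mem_image, Finset.mem_coe,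
      Multiset.mem_toFinset, Multiset.mem_powerset]
    constructor
    · rintro ⟨hm, hd⟩
      exact ⟨η.roots, roots.le_of_dvd hΛ hd,
        (Splits.eq_prod_roots_of_monic
          (Splits.of_dvd (by simpa using hsplit) hΛ hd) hm).symm⟩
    · rintro ⟨s, hs, rfl⟩
      exact ⟨hPmonic s, hPdvd s hs⟩
  have hinj : Set.InjOn P ↑(R.powerset.toFinset) := by
    intro s _ t _ hst
    have := congrArg Polynomial.roots hst
    rwa [hPdef, roots_multiset_prod_X_sub_C, roots_multiset_prod_X_sub_C] at this
  rw [hset, finsum_mem_coe_finset, Finset.sum_image hinj]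
  have hsummand : ∀ s ∈ R.powerset.toFinset,
      Q ^ (Λ / P s).natDegree * (∏ a ∈ (Λ / P s).roots.toFinset, r)
        = Q ^ Multiset.card (R - s) * r ^ (R - s).toFinset.card := by
    intro s hs
    rw [Multiset.mem_toFinset, Multiset.mem_powerset] at hs
    rw [hdiv s hs, natDegree_C_mul hc, roots_C_mul _ hc, hPdef,
      natDegree_multiset_prod_X_sub_C_eq_card, roots_multiset_prod_X_sub_C,
      Finset.prod_const]
  rw [Finset.sum_congr rfl hsummand]
  have hre : ∑ s ∈ R.powerset.toFinset,
        Q ^ Multiset.card (R - s) * r ^ (R - s).toFinset.card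
      = ∑ t ∈ R.powerset.toFinset, Q ^ Multiset.card t * r ^ t.toFinset.card := by
    refine Finset.sum_nbij' (fun s => R - s) (fun t => R - t) ?_ ?_ ?_ ?_ ?_
    · intro s _
      rw [Multiset.mem_toFinset, Multiset.mem_powerset]
      exact tsub_le_self
    · intro t _
      rw [Multiset.mem_toFinset, Multiset.mem_powerset]
      exact tsub_le_self
    · intro s hs
      rw [Multiset.mem_toFinset, Multiset.mem_powerset] at hs
      exact tsub_tsub_cancel_of_le hs
    · intro t ht
      rw [Multiset.mem_toFinset, Multiset.mem_powerset] at ht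
      exact tsub_tsub_cancel_of_le ht
    · intro s _
      rfl
  rw [hre]
  have hfac : ∀ t ∈ R.powerset.toFinset,
      Q ^ Multiset.card t * r ^ t.toFinset.card
        = ∏ a ∈ R.toFinset, (Q ^ (t.count a) * (if t.count a = 0 then 1 else r)) := by
    intro t ht
    rw [Multiset.mem_toFinset, Multiset.mem_powerset] at ht
    have hsub : t.toFinset ⊆ R.toFinset := fun a ha =>
      Multiset.mem_toFinset.mpr (Multiset.mem_of_le ht (Multiset.mem_toFinset.mp ha))
    rw [Finset.prod_mul_distrib, Finset.prod_pow_eq_pow_sum,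
      Multiset.sum_count_eq_card (fun a ha => Multiset.mem_toFinset.mpr
        (Multiset.mem_of_le ht ha))]
    congr 1
    rw [← Finset.prod_subset hsub (fun a _ ha =>
      if_pos (Multiset.count_eq_zero.mpr fun h => ha (Multiset.mem_toFinset.mpr h)))]
    rw [Finset.prod_congr rfl (fun a ha =>
      if_neg fun h => (Multiset.count_eq_zero.mp h) (Multiset.mem_toFinset.mp ha)),
      Finset.prod_const]
  rw [Finset.sum_congr rfl hfac,
    sum_powerset_toFinset R (fun a k => Q ^ k * (if k = 0 then 1 else r))]
  have hdeg : Λ.natDegree = Multiset.card R := (splits_iff_card_roots.mp (by simpa using hsplit)).symm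
  have hcount : ∀ a ∈ R.toFinset, R.count a = rootMultiplicity a Λ := fun a _ =>
    count_roots Λ
  rw [hdeg, ← Multiset.toFinset_sum_count_eq R, ← Finset.prod_pow_eq_pow_sum,
    ← Finset.prod_mul_distrib]
  refine Finset.prod_congr rfl fun a ha => ?_
  rw [geom_step Q hQ2 ℓ (R.count a) hℓ, hcount a ha]
end

section
/- The minimum distance of the simultaneous multiplicity rational function code SRF_ℓ(M; d_f, d_g) is strictly greater than L − d_f − d_g + 1, where L = deg M. That is, for any two distinct codewords C_1, C_2, the degree of their error locator polynomial exceeds L − d_f − d_g + 1. -/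
open Polynomial

/-! A row `i` in which the two codewords differ gives `φ = f i * g' - f' i * g ≠ 0`. Every `μ j`
is at most the multiplicity of the root `α j` of `φ`, so `∑ μ j ≤ deg φ ≤ d_f + d_g - 2`, whereas
`deg Λ = L - ∑ μ j`. -/

namespace Polynomial

theorem natDegree_lt_of_degree_lt_of_pos {R : Type*} [Semiring R] {p : R[X]} {a : ℕ}
    (ha : 0 < a) (hp : p.degree < a) : p.natDegree < a := by
  rcases eq_or_ne p 0 with rfl | hp0
  · simpa using ha
  · exact (natDegree_lt_iff_degree_lt hp0).2 hp

theorem natDegree_mul_sub_mul_add_two_le {R : Type*} [Ring R] {p q r s : R[X]} {a b : ℕ}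
    (ha : 0 < a) (hb : 0 < b) (hp : p.degree < a) (hq : q.degree < b)
    (hr : r.degree < a) (hs : s.degree < b) :
    (p * q - r * s).natDegree + 2 ≤ a + b := by
  have := natDegree_mul_le (p := p) (q := q)
  have := natDegree_mul_le (p := r) (q := s)
  have := natDegree_sub_le (p * q) (r * s)
  have := natDegree_lt_of_degree_lt_of_pos ha hp
  have := natDegree_lt_of_degree_lt_of_pos hb hq
  have := natDegree_lt_of_degree_lt_of_pos ha hr
  have := natDegree_lt_of_degree_lt_of_pos hb hs
  omega

theorem natDegree_prod_X_sub_C_pow {R : Type*} [CommRing R] [Nontrivial R] {ι : Type*}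
    (s : Finset ι) (α : ι → R) (e : ι → ℕ) :
    (∏ j ∈ s, (X - C (α j)) ^ e j).natDegree = ∑ j ∈ s, e j := by
  rw [natDegree_prod_of_monic _ _ fun j _ => (monic_X_sub_C (α j)).pow (e j)]
  simp only [(monic_X_sub_C _).natDegree_pow, natDegree_X_sub_C, mul_one]

theorem sum_rootMultiplicity_le_natDegree {R : Type*} [CommRing R] [IsDomain R] {ι : Type*}
    {α : ι → R} (hα : Function.Injective α) (s : Finset ι) (p : R[X]) :
    ∑ j ∈ s, rootMultiplicity (α j) p ≤ p.natDegree := by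
  classical
  calc ∑ j ∈ s, rootMultiplicity (α j) p
      = ∑ x ∈ s.image α, p.roots.count x := by
        rw [Finset.sum_image hα.injOn]; simp only [count_roots]
    _ ≤ ∑ x ∈ s.image α ∪ p.roots.toFinset, p.roots.count x :=
        Finset.sum_le_sum_of_subset Finset.subset_union_left
    _ = Multiset.card p.roots := Multiset.sum_count_eq_card fun x hx =>
        Finset.mem_union_right _ (Multiset.mem_toFinset.2 hx)
    _ ≤ p.natDegree := card_roots' p

end Polynomial

theorem srf_min_dist_general {F : Type*} [Field F] [DecidableEq F]
    (n ℓ : ℕ) [NeZero ℓ]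
    (α : Fin n → F) (hα : Function.Injective α)
    (lam : Fin n → ℕ)
    (M : F[X]) (hM : M = ∏ j, (X - C (α j)) ^ lam j)
    (L : ℕ) (hL : L = M.natDegree)
    (df dg : ℕ) (hdf : 0 < df) (hdg : 0 < dg)
    (f f' : Fin ℓ → F[X]) (g g' : F[X])
    (hdegf : ∀ i, (f i).degree < (df : ℕ)) (hdegf' : ∀ i, (f' i).degree < (df : ℕ))
    (hdegg : g.degree < (dg : ℕ)) (hdegg' : g'.degree < (dg : ℕ))
    -- the two codewords differ in some column
    (hne : ∃ i j, ¬ ((X - C (α j)) ^ lam j ∣ (f i * g' - f' i * g)))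
    -- μ j is the truncated minimal error index of column j
    (μ : Fin n → ℕ)
    (hμ : ∀ j, μ j = min (lam j) (Finset.univ.inf' Finset.univ_nonempty
        (fun i => if f i * g' - f' i * g = 0 then lam j
          else rootMultiplicity (α j) (f i * g' - f' i * g))))
    (Λ : F[X]) (hΛ : Λ = ∏ j, (X - C (α j)) ^ (lam j - μ j)) :
    (L : ℤ) - df - dg + 1 < (Λ.natDegree : ℤ) := by
  obtain ⟨i, _, hij⟩ := hne
  have hφ : f i * g' - f' i * g ≠ 0 := fun h => hij (h ▸ dvd_zero _)
  have hμ_le_lam : ∀ j, μ j ≤ lam j := fun j => hμ j ▸ min_le_left _ _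
  have hμ_le_mult : ∀ j, μ j ≤ rootMultiplicity (α j) (f i * g' - f' i * g) := fun j => by
    rw [hμ j]
    exact (min_le_right _ _).trans ((Finset.inf'_le _ (Finset.mem_univ i)).trans (if_neg hφ).le)
  have hμ_sum : ∑ j, μ j + 2 ≤ df + dg := calc
    ∑ j, μ j + 2 ≤ ∑ j, rootMultiplicity (α j) (f i * g' - f' i * g) + 2 := by
      gcongr with j; exact hμ_le_mult j
    _ ≤ (f i * g' - f' i * g).natDegree + 2 := by
      gcongr; exact sum_rootMultiplicity_le_natDegree hα _ _
    _ ≤ df + dg :=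
      natDegree_mul_sub_mul_add_two_le hdf hdg (hdegf i) hdegg' (hdegf' i) hdegg
  have hΛ_deg : Λ.natDegree + ∑ j, μ j = L := by
    rw [hΛ, hL, hM, natDegree_prod_X_sub_C_pow, natDegree_prod_X_sub_C_pow,
      ← Finset.sum_add_distrib]
    exact Finset.sum_congr rfl fun j _ => Nat.sub_add_cancel (hμ_le_lam j)
  omega

/-- Minimum distance of simultaneous multiplicity rational function codes: for two distinct
codewords given by reduced vectors `f/g` and `f'/g'`, the degree of the error locator polynomial
`Λ = ∏_j (x − α_j)^{λ_j − μ_j}` is strictly greater than `L − d_f − d_g + 1`. -/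
theorem srf_min_dist {F : Type*} [Field F] [Fintype F] [DecidableEq F]
    (n ℓ : ℕ) [NeZero ℓ]
    (α : Fin n → F) (hα : Function.Injective α)
    (lam : Fin n → ℕ) (hlam : ∀ j, 0 < lam j)
    (M : F[X]) (hM : M = ∏ j, (X - C (α j)) ^ lam j)
    (L : ℕ) (hL : L = M.natDegree)
    (df dg : ℕ) (hdf : 0 < df) (hdg : 0 < dg) (hsum : df + dg ≤ L + 1)
    (f f' : Fin ℓ → F[X]) (g g' : F[X]) (hg : g ≠ 0) (hg' : g' ≠ 0)
    (hdegf : ∀ i, (f i).degree < (df : ℕ)) (hdegf' : ∀ i, (f' i).degree < (df : ℕ))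
    (hdegg : g.degree < (dg : ℕ)) (hdegg' : g'.degree < (dg : ℕ))
    (hred : gcd (Finset.univ.gcd f) g = 1) (hred' : gcd (Finset.univ.gcd f') g' = 1)
    (hgM : IsCoprime g M) (hg'M : IsCoprime g' M)
    -- the two codewords differ in some column
    (hne : ∃ i j, ¬ ((X - C (α j)) ^ lam j ∣ (f i * g' - f' i * g)))
    -- μ j is the truncated minimal error index of column j
    (μ : Fin n → ℕ)
    (hμ : ∀ j, μ j = min (lam j) (Finset.univ.inf' Finset.univ_nonempty
        (fun i => if f i * g' - f' i * g = 0 then lam j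
          else rootMultiplicity (α j) (f i * g' - f' i * g))))
    (Λ : F[X]) (hΛ : Λ = ∏ j, (X - C (α j)) ^ (lam j - μ j)) :
    (L : ℤ) - df - dg + 1 < (Λ.natDegree : ℤ) :=
  srf_min_dist_general n ℓ α hα lam M hM L hL df dg hdf hdg f f' g g' hdegf hdegf' hdegg hdegg' hne
    μ hμ Λ hΛ
end

section
/- Let f_1,…,f_ℓ, g and f'_1,…,f'_ℓ, g' be polynomials over F_q with max_i deg f_i < d_f, max_i deg f'_i < d_f, deg g < d_g, deg g' < d_g, gcd(f_1,…,f_ℓ,g) = 1, gcd(f'_1,…,f'_ℓ,g') = 1, and suppose L = Σ_j λ_j ≥ d_f + d_g − 1. If the multi-precision encodings of f/g and f'/g' agree at all points α_1,…,α_n with multiplicities λ_1,…,λ_n (i.e., for each j, ν_{α_j}(g) = ν_{α_j}(g') and f/(g/(x−α_j)^{ν_{α_j}(g)}) ≡ f'/(g'/(x−α_j)^{ν_{α_j}(g')}) mod (x−α_j)^{λ_j − ν_{α_j}(g)}), then f_i·g' = f'_i·g for all i, i.e., f/g = f'/g' as vectors of rational functions. -/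
/-!
Fix a point `α_j` and put `ν = ν_{α_j}(g) = ν_{α_j}(g')`. Then `(x − α_j)^ν` divides both `g`
and `g'`, and the cofactors are units modulo `(x − α_j)^{λ_j − ν}`, so equality of the encodings
cross-multiplies to `(x − α_j)^{λ_j − ν} ∣ f_i (g'/(x − α_j)^ν) − f'_i (g/(x − α_j)^ν)`;
multiplying back by `(x − α_j)^ν` gives `(x − α_j)^{λ_j} ∣ f_i g' − f'_i g`. The points are
distinct, so `M` divides `f_i g' − f'_i g`, a polynomial of degree `< d_f + d_g − 1 ≤ L = deg M`,
which therefore vanishes.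
-/

open Polynomial

theorem Ring.mul_inverse_eq_mul_inverse_iff {R : Type*} [CommRing R] {a b u v : R}
    (hu : IsUnit u) (hv : IsUnit v) :
    a * Ring.inverse u = b * Ring.inverse v ↔ a * v = b * u := by
  have hu₁ := Ring.mul_inverse_cancel u hu
  have hv₁ := Ring.mul_inverse_cancel v hv
  constructor <;> intro h
  · linear_combination (u * v) * h - a * v * hu₁ + b * u * hv₁
  · linear_combination (Ring.inverse u * Ring.inverse v) * h - a * Ring.inverse u * hv₁
      + b * Ring.inverse v * hu₁

theorem IsCoprime.isUnit_mk_span_singleton {R : Type*} [CommRing R] {x y : R}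
    (h : IsCoprime x y) : IsUnit (Ideal.Quotient.mk (Ideal.span {x}) y) := by
  obtain ⟨a, b, hab⟩ := h
  refine .of_mul_eq_one (Ideal.Quotient.mk _ b) ?_
  rw [← map_mul, ← map_one (Ideal.Quotient.mk _), Ideal.Quotient.eq, Ideal.mem_span_singleton]
  exact ⟨-a, by linear_combination hab⟩

theorem pow_add_dvd_mul_sub_mul_of_mk_mul_inverse_eq {R : Type*} [CommRing R]
    {p f f' u u' : R} {ν k : ℕ}
    (hu : IsUnit (Ideal.Quotient.mk (Ideal.span {p ^ k}) u))
    (hu' : IsUnit (Ideal.Quotient.mk (Ideal.span {p ^ k}) u'))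
    (h : Ideal.Quotient.mk (Ideal.span {p ^ k}) f * Ring.inverse (Ideal.Quotient.mk _ u)
      = Ideal.Quotient.mk (Ideal.span {p ^ k}) f' * Ring.inverse (Ideal.Quotient.mk _ u')) :
    p ^ (ν + k) ∣ f * (p ^ ν * u') - f' * (p ^ ν * u) := by
  rw [Ring.mul_inverse_eq_mul_inverse_iff hu hu', ← map_mul, ← map_mul, Ideal.Quotient.eq,
    Ideal.mem_span_singleton] at h
  rw [pow_add]
  convert mul_dvd_mul_left (p ^ ν) h using 1
  ring

namespace Polynomial

variable {F : Type*} [Field F]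

theorem isCoprime_X_sub_C_pow_div_pow_rootMultiplicity {g : F[X]} (hg : g ≠ 0) (a : F) (k : ℕ) :
    IsCoprime ((X - C a) ^ k) (g / (X - C a) ^ rootMultiplicity a g) := by
  refine (((irreducible_X_sub_C a).isCoprime_or_dvd _).resolve_right ?_).pow_left
  rw [dvd_iff_isRoot, ← divByMonic_eq_div _ ((monic_X_sub_C a).pow _)]
  exact eval_divByMonic_pow_rootMultiplicity_ne_zero a hg

theorem X_sub_C_pow_dvd_mul_sub_mul_of_encoding_eq {a : F} {lam : ℕ} {f f' g g' : F[X]}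
    (hg : g ≠ 0) (hg' : g' ≠ 0) (hval : rootMultiplicity a g' = rootMultiplicity a g)
    (henc : Ideal.Quotient.mk (Ideal.span {(X - C a) ^ (lam - rootMultiplicity a g)}) f *
        Ring.inverse (Ideal.Quotient.mk _ (g / (X - C a) ^ rootMultiplicity a g))
      = Ideal.Quotient.mk (Ideal.span {(X - C a) ^ (lam - rootMultiplicity a g)}) f' *
        Ring.inverse (Ideal.Quotient.mk _ (g' / (X - C a) ^ rootMultiplicity a g))) :
    (X - C a) ^ lam ∣ f * g' - f' * g := by
  set ν := rootMultiplicity a g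
  have hpow : (X - C a) ^ ν ≠ 0 := pow_ne_zero _ (X_sub_C_ne_zero a)
  have hg_eq : (X - C a) ^ ν * (g / (X - C a) ^ ν) = g :=
    EuclideanDomain.mul_div_cancel' hpow (pow_rootMultiplicity_dvd g a)
  have hg'_eq : (X - C a) ^ ν * (g' / (X - C a) ^ ν) = g' :=
    EuclideanDomain.mul_div_cancel' hpow (hval ▸ pow_rootMultiplicity_dvd g' a)
  have hunit (q : F[X]) (hq : q ≠ 0) :=
    (isCoprime_X_sub_C_pow_div_pow_rootMultiplicity hq a (lam - ν)).isUnit_mk_span_singleton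
  have hdvd := pow_add_dvd_mul_sub_mul_of_mk_mul_inverse_eq (ν := ν)
    (hunit g hg) (hval ▸ hunit g' hg') henc
  rw [hg_eq, hg'_eq] at hdvd
  exact (pow_dvd_pow _ le_add_tsub).trans hdvd

theorem degree_mul_lt_add_sub_one {R : Type*} [Semiring R] {a b : R[X]} {m n : ℕ}
    (ha : a.degree < m) (hb : b.degree < n) : (a * b).degree < (m + n - 1 : ℕ) := by
  rcases eq_or_ne a 0 with rfl | ha₀
  · simp
  rcases eq_or_ne b 0 with rfl | hb₀
  · simp
  rw [← natDegree_lt_iff_degree_lt ha₀] at ha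
  rw [← natDegree_lt_iff_degree_lt hb₀] at hb
  calc (a * b).degree ≤ (a.natDegree + b.natDegree : ℕ) :=
        degree_mul_le_of_le degree_le_natDegree degree_le_natDegree
    _ < (m + n - 1 : ℕ) := by exact_mod_cast (by omega)

theorem degree_mul_sub_mul_lt {R : Type*} [Ring R] {a a' b b' : R[X]} {m n : ℕ}
    (ha : a.degree < m) (ha' : a'.degree < m) (hb : b.degree < n) (hb' : b'.degree < n) :
    (a * b' - a' * b).degree < (m + n - 1 : ℕ) :=
  (degree_sub_le _ _).trans_lt
    (max_lt (degree_mul_lt_add_sub_one ha hb') (degree_mul_lt_add_sub_one ha' hb))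

end Polynomial

theorem multiprecision_encoding_injective_general {F : Type*} [Field F]
    (n ℓ : ℕ)
    (α : Fin n → F) (hα : Function.Injective α)
    (lam : Fin n → ℕ)
    (L : ℕ) (hL : L = ∑ j, lam j)
    (df dg : ℕ)
    (hLd : df + dg - 1 ≤ L)
    (f f' : Fin ℓ → F[X]) (g g' : F[X]) (hg : g ≠ 0) (hg' : g' ≠ 0)
    (hdegf : ∀ i, (f i).degree < (df : ℕ)) (hdegf' : ∀ i, (f' i).degree < (df : ℕ))
    (hdegg : g.degree < (dg : ℕ)) (hdegg' : g'.degree < (dg : ℕ))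
    -- the valuation parts of the encodings agree
    (hval : ∀ j, rootMultiplicity (α j) g' = rootMultiplicity (α j) g)
    -- the reduction parts of the encodings agree
    (henc : ∀ (j : Fin n) (i : Fin ℓ),
      (Ideal.Quotient.mk
          (Ideal.span {(X - C (α j)) ^ (lam j - rootMultiplicity (α j) g)}) (f i)) *
        Ring.inverse (Ideal.Quotient.mk
          (Ideal.span {(X - C (α j)) ^ (lam j - rootMultiplicity (α j) g)})
          (g / (X - C (α j)) ^ (rootMultiplicity (α j) g)))
      = (Ideal.Quotient.mk
          (Ideal.span {(X - C (α j)) ^ (lam j - rootMultiplicity (α j) g)}) (f' i)) *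
        Ring.inverse (Ideal.Quotient.mk
          (Ideal.span {(X - C (α j)) ^ (lam j - rootMultiplicity (α j) g)})
          (g' / (X - C (α j)) ^ (rootMultiplicity (α j) g)))) :
    ∀ i, f i * g' = f' i * g := by
  intro i
  have hdvd : (∏ j, (X - C (α j)) ^ lam j) ∣ f i * g' - f' i * g :=
    Fintype.prod_dvd_of_coprime (fun _ _ hjk => (pairwise_coprime_X_sub_C hα hjk).pow)
      fun j => X_sub_C_pow_dvd_mul_sub_mul_of_encoding_eq hg hg' (hval j) (henc j i)
  have hdeg : (∏ j, (X - C (α j)) ^ lam j).degree = (L : WithBot ℕ) := by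
    rw [hL, degree_prod]
    simp
  rw [← sub_eq_zero]
  refine eq_zero_of_dvd_of_degree_lt hdvd ?_
  rw [hdeg]
  exact (degree_mul_sub_mul_lt (hdegf i) (hdegf' i) hdegg hdegg').trans_le
    (by exact_mod_cast hLd)

/-- Injectivity of the multi-precision encoding: if the encodings of the reduced vectors `f/g`
and `f'/g'` agree at all points (same valuations of denominators, and equal shifted reductions
modulo `(x − α_j)^{λ_j − ν_{α_j}(g)}`), and `L ≥ d_f + d_g − 1`, then `f/g = f'/g'`. -/
theorem multiprecision_encoding_injective {F : Type*} [Field F] [Fintype F] [DecidableEq F]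
    (n ℓ : ℕ)
    (α : Fin n → F) (hα : Function.Injective α)
    (lam : Fin n → ℕ) (hlam : ∀ j, 0 < lam j)
    (L : ℕ) (hL : L = ∑ j, lam j)
    (df dg : ℕ) (hdf : 0 < df) (hdg : 0 < dg)
    (hLd : df + dg - 1 ≤ L)
    (f f' : Fin ℓ → F[X]) (g g' : F[X]) (hg : g ≠ 0) (hg' : g' ≠ 0)
    (hdegf : ∀ i, (f i).degree < (df : ℕ)) (hdegf' : ∀ i, (f' i).degree < (df : ℕ))
    (hdegg : g.degree < (dg : ℕ)) (hdegg' : g'.degree < (dg : ℕ))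
    (hred : gcd (Finset.univ.gcd f) g = 1) (hred' : gcd (Finset.univ.gcd f') g' = 1)
    -- the valuation parts of the encodings agree
    (hval : ∀ j, rootMultiplicity (α j) g' = rootMultiplicity (α j) g)
    -- the reduction parts of the encodings agree
    (henc : ∀ (j : Fin n) (i : Fin ℓ),
      (Ideal.Quotient.mk
          (Ideal.span {(X - C (α j)) ^ (lam j - rootMultiplicity (α j) g)}) (f i)) *
        Ring.inverse (Ideal.Quotient.mk
          (Ideal.span {(X - C (α j)) ^ (lam j - rootMultiplicity (α j) g)})
          (g / (X - C (α j)) ^ (rootMultiplicity (α j) g)))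
      = (Ideal.Quotient.mk
          (Ideal.span {(X - C (α j)) ^ (lam j - rootMultiplicity (α j) g)}) (f' i)) *
        Ring.inverse (Ideal.Quotient.mk
          (Ideal.span {(X - C (α j)) ^ (lam j - rootMultiplicity (α j) g)})
          (g' / (X - C (α j)) ^ (rootMultiplicity (α j) g)))) :
    ∀ i, f i * g' = f' i * g :=
  multiprecision_encoding_injective_general n ℓ α hα lam L hL df dg hLd f f' g g' hg hg' hdegf
    hdegf' hdegg hdegg' hval henc
end

section
/- Let Λ ∈ F_q[x] split completely over F_q, η a monic divisor of Λ, and B an integer. For F ∈ F_q[x]/Λ with gcd(any lift of F, Λ) divisible by η, write F = η·F' in the obvious sense. Then: the remainder of any lift of an element of the form η·a modulo Λ has degree ≤ B + deg Λ if and only if the remainder of a modulo Λ/η has degree ≤ B + deg(Λ/η). Concretely: for φ, E ∈ F_q[x] with gcd(φ, Λ) = η, deg((φ·E) rem Λ) ≤ B + deg Λ if and only if deg(((φ/η)·E) rem (Λ/η)) ≤ B + deg(Λ/η). -/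
open Polynomial

/-- `DegLE r C` means `deg r ≤ C`, where `deg 0 = −∞` and `C : ℤ`. -/
def DegLE {F : Type*} [Field F] (r : Polynomial F) (C : ℤ) : Prop :=
  r.degree.map (Nat.cast : ℕ → ℤ) ≤ (C : WithBot ℤ)

lemma poly_mul_mod_mul_left {F : Type*} [Field F] (c a b : Polynomial F)
    (hc : c ≠ 0) (hb : b ≠ 0) : (c * a) % (c * b) = c * (a % b) := by
  have hcb : c * b ≠ 0 := mul_ne_zero hc hb
  have hlcb : (c * b).leadingCoeff ≠ 0 := leadingCoeff_ne_zero.mpr hcb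
  have hmonic : ((c * b) * C (c * b).leadingCoeff⁻¹).Monic :=
    monic_mul_leadingCoeff_inv hcb
  have hdeg : ((c * b) * C (c * b).leadingCoeff⁻¹).degree = (c * b).degree := by
    rw [degree_mul, degree_C (inv_ne_zero hlcb), add_zero]
  have hlt : (c * (a % b)).degree < ((c * b) * C (c * b).leadingCoeff⁻¹).degree := by
    rw [hdeg, degree_mul, degree_mul]
    exact WithBot.add_lt_add_left (degree_ne_bot.mpr hc)
      (EuclideanDomain.mod_lt a hb)
  have heq : c * (a % b) + ((c * b) * C (c * b).leadingCoeff⁻¹) *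
      (C (c * b).leadingCoeff * (a / b)) = c * a := by
    have : ((c * b) * C (c * b).leadingCoeff⁻¹) * (C (c * b).leadingCoeff * (a / b))
        = c * (b * (a / b)) := by
      rw [mul_assoc (c * b), ← mul_assoc (C (c * b).leadingCoeff⁻¹), ← C_mul,
        inv_mul_cancel₀ hlcb, C_1, one_mul, mul_assoc]
    rw [this, ← mul_add, add_comm, EuclideanDomain.div_add_mod]
  have := (div_modByMonic_unique (C (c * b).leadingCoeff * (a / b)) (c * (a % b))
    hmonic ⟨heq, hlt⟩).2
  rw [Polynomial.mod_def, this]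

/-- Degree-transfer: for `φ, E ∈ F_q[x]` with `gcd(φ, Λ) = η`,
`deg((φ·E) rem Λ) ≤ B + deg Λ  ↔  deg(((φ/η)·E) rem (Λ/η)) ≤ B + deg(Λ/η)`. -/
theorem rem_deg_transfer {F : Type*} [Field F] [Fintype F] [DecidableEq F]
    (Λ φ E : F[X]) (hΛ : Λ ≠ 0) (hsplit : Λ.Splits)
    (η : F[X]) (hη : η = gcd φ Λ) (B : ℤ) :
    DegLE ((φ * E) % Λ) (B + Λ.natDegree) ↔
      DegLE (((φ / η) * E) % (Λ / η)) (B + (Λ / η).natDegree) := by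
  have hηΛ : η ∣ Λ := hη ▸ gcd_dvd_right φ Λ
  have hηφ : η ∣ φ := hη ▸ gcd_dvd_left φ Λ
  have hηne : η ≠ 0 := by
    intro h
    exact hΛ (by simpa [h] using hηΛ)
  have hΛeq : η * (Λ / η) = Λ := EuclideanDomain.mul_div_cancel' hηne hηΛ
  have hφeq : η * (φ / η) = φ := EuclideanDomain.mul_div_cancel' hηne hηφ
  have hψne : Λ / η ≠ 0 := by
    intro h
    exact hΛ (by rw [← hΛeq, h, mul_zero])
  have hmod : (φ * E) % Λ = η * ((φ / η * E) % (Λ / η)) := by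
    conv_lhs => rw [← hφeq, ← hΛeq, mul_assoc]
    exact poly_mul_mod_mul_left η (φ / η * E) (Λ / η) hηne hψne
  have hnd : (Λ.natDegree : ℤ) = η.natDegree + (Λ / η).natDegree := by
    conv_lhs => rw [← hΛeq]
    rw [natDegree_mul hηne hψne]; push_cast; ring
  rw [hmod]
  unfold DegLE
  rcases eq_or_ne ((φ / η * E) % (Λ / η)) 0 with h0 | h0
  · simp [h0]
  · rw [degree_mul, degree_eq_natDegree hηne, degree_eq_natDegree h0,
      ← Nat.cast_add, hnd]
    simp only [Nat.cast_withBot, WithBot.map_coe, WithBot.coe_le_coe]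
    push_cast
    omega
end

section
/- Under the unique decoding regime, decoding is exact: let M = ∏_j (x−α_j)^{λ_j}, L = deg M, degree bounds d_f, d_g with d_f + d_g ≤ L + 1, and t < ⌊(L − d_f − d_g + 1)/2⌋. Let f/g be a reduced vector with deg f_i < d_f, deg g < d_g, gcd(g, M) = 1, and let R be a received word with interpolants R_i and error locator Λ (relative to the codeword of f/g) of degree ≤ t. Then every solution (φ, ψ_1, …, ψ_ℓ) ∈ F_q[x]^{ℓ+1} of the key equations ψ_i ≡ φ·R_i mod M with deg φ < d_g + t and deg ψ_i < d_f + t is a polynomial multiple of (Λg, Λf_1, …, Λf_ℓ). -/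
/-!
Write `e_i = g R_i - f_i` and `N = ∏_j (X - α_j)^{μ_j}`, so that `N ∣ e_i` for every `i` and
`M = Λ N`. Multiplying the key equation by `Λ g` and subtracting `φ Λ e_i` shows that `M` divides
`Λ (g ψ_i - φ f_i)`, whose degree is below `deg M` in the unique decoding regime; hence
`g ψ_i = φ f_i`. As `f/g` is reduced, `φ = q g` and `ψ_i = q f_i`. Then `M ∣ q e_i` for all `i`,
and at each `α_j` with `μ_j < λ_j` some row `e_i` has valuation exactly `μ_j`, so
`(X - α_j)^{λ_j - μ_j} ∣ q`; that is, `Λ ∣ q`.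
-/

open Polynomial

theorem Finset.prod_pow_sub_mul_prod_pow {ι M : Type*} [Fintype ι] [CommMonoid M] (b : ι → M)
    {l m : ι → ℕ} (h : ∀ j, m j ≤ l j) :
    (∏ j, b j ^ (l j - m j)) * ∏ j, b j ^ m j = ∏ j, b j ^ l j := by
  rw [← Finset.prod_mul_distrib]
  exact Finset.prod_congr rfl fun j _ => by rw [← pow_add, Nat.sub_add_cancel (h j)]

theorem dvd_of_forall_dvd_mul_of_gcd_eq_one {α ι : Type*} [CommMonoidWithZero α]
    [NormalizedGCDMonoid α] {s : Finset ι} {f : ι → α} {g φ : α}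
    (hred : gcd (s.gcd f) g = 1) (h : ∀ i ∈ s, g ∣ φ * f i) : g ∣ φ := by
  have hgcd : g ∣ φ * s.gcd f :=
    (Finset.gcd_mul_left' s f φ).dvd_iff_dvd_right.1 (Finset.dvd_gcd h)
  have hrel : IsRelPrime g (s.gcd f) := (gcd_isUnit_iff_isRelPrime.1 (hred ▸ isUnit_one)).symm
  exact hrel.dvd_of_dvd_mul_right hgcd

namespace Polynomial

theorem pairwise_isCoprime_X_sub_C_pow {F ι : Type*} [Field F] {α : ι → F}
    (hα : Function.Injective α) (k : ι → ℕ) :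
    Pairwise (Function.onFun IsCoprime fun j => (X - C (α j)) ^ k j) := fun _ _ hjk =>
  (isCoprime_X_sub_C_of_isUnit_sub (sub_ne_zero.2 (hα.ne hjk)).isUnit).pow

theorem pow_sub_rootMultiplicity_dvd_of_pow_dvd_mul {R : Type*} [CommRing R] [IsDomain R]
    {a : R} {l : ℕ} {q e : R[X]} (he : e ≠ 0) (h : (X - C a) ^ l ∣ q * e) :
    (X - C a) ^ (l - rootMultiplicity a e) ∣ q := by
  rcases eq_or_ne q 0 with rfl | hq
  · exact dvd_zero _
  have hl : l ≤ rootMultiplicity a q + rootMultiplicity a e := by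
    rw [← rootMultiplicity_mul (mul_ne_zero hq he)]
    exact (le_rootMultiplicity_iff (mul_ne_zero hq he)).2 h
  exact (pow_dvd_pow _ (by omega)).trans (pow_rootMultiplicity_dvd q a)

theorem mul_eq_mul_of_key_equation {R : Type*} [CommRing R] [IsDomain R]
    {Λ N g f r φ ψ : R[X]} (hΛ : Λ ≠ 0) (hN : N ∣ g * r - f) (hkey : Λ * N ∣ φ * r - ψ)
    (hdeg : (Λ * (g * ψ - φ * f)).natDegree < (Λ * N).natDegree) : g * ψ = φ * f := by
  have hdvd : Λ * N ∣ Λ * (g * ψ - φ * f) := by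
    rw [show Λ * (g * ψ - φ * f) = φ * (Λ * (g * r - f)) - Λ * g * (φ * r - ψ) by ring]
    exact dvd_sub ((mul_dvd_mul_left Λ hN).mul_left φ) (hkey.mul_left _)
  exact sub_eq_zero.1 ((mul_eq_zero.1 (eq_zero_of_dvd_of_natDegree_lt hdvd hdeg)).resolve_left hΛ)

section TruncRootMultiplicity

variable {F ι : Type*} [Field F] [DecidableEq F] [Fintype ι] [Nonempty ι]

/-- The `μ_j` of the paper: the `(X - a)`-adic valuation of the column `(e_i)_i`, truncated
at `l`; a zero entry has infinite valuation. -/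
noncomputable def truncRootMultiplicity (a : F) (l : ℕ) (e : ι → F[X]) : ℕ :=
  min l (Finset.univ.inf' Finset.univ_nonempty
    fun i => if e i = 0 then l else rootMultiplicity a (e i))

variable {a : F} {l : ℕ} {e : ι → F[X]}

theorem truncRootMultiplicity_le : truncRootMultiplicity a l e ≤ l := min_le_left _ _

theorem pow_truncRootMultiplicity_dvd (i : ι) : (X - C a) ^ truncRootMultiplicity a l e ∣ e i := by
  rcases eq_or_ne (e i) 0 with he | he
  · rw [he]; exact dvd_zero _
  have hle : truncRootMultiplicity a l e ≤ rootMultiplicity a (e i) := by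
    refine (min_le_right _ _).trans ?_
    simpa only [if_neg he] using Finset.inf'_le
      (fun i => if e i = 0 then l else rootMultiplicity a (e i)) (Finset.mem_univ i)
  exact (pow_dvd_pow _ hle).trans (pow_rootMultiplicity_dvd _ a)

theorem exists_rootMultiplicity_eq_truncRootMultiplicity (h : truncRootMultiplicity a l e < l) :
    ∃ i, e i ≠ 0 ∧ rootMultiplicity a (e i) = truncRootMultiplicity a l e := by
  obtain ⟨i, -, hi⟩ := Finset.exists_mem_eq_inf' Finset.univ_nonempty
    fun i => if e i = 0 then l else rootMultiplicity a (e i)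
  unfold truncRootMultiplicity at h ⊢
  rw [hi] at h ⊢
  by_cases he : e i = 0
  · simp only [he, if_true, min_self, lt_self_iff_false] at h
  · simp only [he, if_false] at h ⊢
    exact ⟨i, he, (min_eq_right ((min_lt_iff.1 h).resolve_left (lt_irrefl l)).le).symm⟩

theorem prod_X_sub_C_pow_truncRootMultiplicity_dvd {κ : Type*} [Fintype κ] {α : κ → F}
    (hα : Function.Injective α) (m : κ → ℕ) (i : ι) :
    ∏ j, (X - C (α j)) ^ truncRootMultiplicity (α j) (m j) e ∣ e i :=
  Fintype.prod_dvd_of_coprime (pairwise_isCoprime_X_sub_C_pow hα _)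
    fun j => pow_truncRootMultiplicity_dvd (a := α j) (l := m j) (e := e) i

theorem prod_X_sub_C_pow_sub_truncRootMultiplicity_dvd {κ : Type*} [Fintype κ] {α : κ → F}
    (hα : Function.Injective α) {m : κ → ℕ} {q : F[X]}
    (h : ∀ i, ∏ j, (X - C (α j)) ^ m j ∣ q * e i) :
    ∏ j, (X - C (α j)) ^ (m j - truncRootMultiplicity (α j) (m j) e) ∣ q := by
  refine Fintype.prod_dvd_of_coprime (pairwise_isCoprime_X_sub_C_pow hα _) fun j => ?_
  rcases (truncRootMultiplicity_le (a := α j) (l := m j) (e := e)).lt_or_eq with hlt | heq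
  · obtain ⟨i, hi, hmult⟩ := exists_rootMultiplicity_eq_truncRootMultiplicity hlt
    rw [← hmult]
    exact pow_sub_rootMultiplicity_dvd_of_pow_dvd_mul hi
      ((Finset.dvd_prod_of_mem (fun j => (X - C (α j)) ^ m j) (Finset.mem_univ j)).trans (h i))
  · rw [heq, Nat.sub_self, pow_zero]
    exact one_dvd q

end TruncRootMultiplicity

end Polynomial

theorem unique_decoding_general {F : Type*} [Field F] [DecidableEq F]
    (n ℓ : ℕ) [NeZero ℓ]
    (α : Fin n → F) (hα : Function.Injective α)
    (lam : Fin n → ℕ)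
    (M : F[X]) (hM : M = ∏ j, (X - C (α j)) ^ lam j)
    (L : ℕ) (hL : L = M.natDegree)
    (df dg t : ℕ)
    (ht : 2 * (t : ℤ) + 2 ≤ (L : ℤ) - df - dg + 1)
    (f : Fin ℓ → F[X]) (g : F[X]) (hg : g ≠ 0)
    (hdegf : ∀ i, (f i).degree < (df : ℕ)) (hdegg : g.degree < (dg : ℕ))
    (hred : gcd (Finset.univ.gcd f) g = 1)
    -- `R i` is the CRT interpolant of row `i` of the received word
    (R : Fin ℓ → F[X])
    -- `μ j` is the truncated valuation of error column `j`
    (μ : Fin n → ℕ)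
    (hμ : ∀ j, μ j = min (lam j) (Finset.univ.inf' Finset.univ_nonempty
        (fun i => if g * R i - f i = 0 then lam j
          else rootMultiplicity (α j) (g * R i - f i))))
    (Λ : F[X]) (hΛ : Λ = ∏ j, (X - C (α j)) ^ (lam j - μ j))
    (hΛt : Λ.natDegree ≤ t) :
    ∀ (φ : F[X]) (ψ : Fin ℓ → F[X]),
      (∀ i, M ∣ (φ * R i - ψ i)) →
      φ.degree < (dg + t : ℕ) → (∀ i, (ψ i).degree < (df + t : ℕ)) →
      ∃ p : F[X], φ = p * (Λ * g) ∧ ∀ i, ψ i = p * (Λ * f i) := by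
  intro φ ψ hkey hφ hψ
  set e : Fin ℓ → F[X] := fun i => g * R i - f i
  obtain rfl : μ = fun j => truncRootMultiplicity (α j) (lam j) e := funext hμ
  have hMΛN : M = Λ * ∏ j, (X - C (α j)) ^ truncRootMultiplicity (α j) (lam j) e := by
    rw [hM, hΛ, Finset.prod_pow_sub_mul_prod_pow _ fun j => truncRootMultiplicity_le]
  have hΛ0 : Λ ≠ 0 := hΛ ▸ Finset.prod_ne_zero_iff.2 fun j _ => pow_ne_zero _ (X_sub_C_ne_zero _)
  have hcross : ∀ i, g * ψ i = φ * f i := by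
    intro i
    refine mul_eq_mul_of_key_equation hΛ0 (prod_X_sub_C_pow_truncRootMultiplicity_dvd hα lam i)
      (hMΛN ▸ hkey i) ?_
    rw [← hMΛN, ← hL]
    calc (Λ * (g * ψ i - φ * f i)).natDegree ≤ t + max (dg + (df + t)) ((dg + t) + df) :=
          natDegree_mul_le_of_le hΛt <| (natDegree_sub_le _ _).trans <| max_le_max
            (natDegree_mul_le_of_le (natDegree_le_of_degree_le hdegg.le)
              (natDegree_le_of_degree_le (hψ i).le))
            (natDegree_mul_le_of_le (natDegree_le_of_degree_le hφ.le)
              (natDegree_le_of_degree_le (hdegf i).le))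
      _ < L := by omega
  obtain ⟨q, rfl⟩ : g ∣ φ :=
    dvd_of_forall_dvd_mul_of_gcd_eq_one hred fun i _ => hcross i ▸ dvd_mul_right g (ψ i)
  have hψq : ∀ i, ψ i = q * f i := fun i => mul_left_cancel₀ hg (by rw [hcross i]; ring)
  obtain ⟨p, rfl⟩ : Λ ∣ q := hΛ ▸ prod_X_sub_C_pow_sub_truncRootMultiplicity_dvd hα fun i => by
    simpa only [← hM, e, hψq i, mul_sub, mul_left_comm g q, mul_assoc] using hkey i
  exact ⟨p, by ring, fun i => by rw [hψq i]; ring⟩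

/-- Unique decoding regime: if `t < ⌊(L − d_f − d_g + 1)/2⌋` (i.e. `2t + 2 ≤ L − d_f − d_g + 1`)
and the error locator `Λ` of the received word relative to the codeword of `f/g` has degree `≤ t`,
then every solution `(φ, ψ)` of the key equations `ψ_i ≡ φ R_i (mod M)` with the degree bounds is
a polynomial multiple of `(Λg, Λf_1, …, Λf_ℓ)`. -/
theorem unique_decoding {F : Type*} [Field F] [Fintype F] [DecidableEq F]
    (n ℓ : ℕ) [NeZero ℓ]
    (α : Fin n → F) (hα : Function.Injective α)
    (lam : Fin n → ℕ) (hlam : ∀ j, 0 < lam j)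
    (M : F[X]) (hM : M = ∏ j, (X - C (α j)) ^ lam j)
    (L : ℕ) (hL : L = M.natDegree)
    (df dg t : ℕ) (hdf : 0 < df) (hdg : 0 < dg) (hsum : df + dg ≤ L + 1)
    (ht : 2 * (t : ℤ) + 2 ≤ (L : ℤ) - df - dg + 1)
    (f : Fin ℓ → F[X]) (g : F[X]) (hg : g ≠ 0)
    (hdegf : ∀ i, (f i).degree < (df : ℕ)) (hdegg : g.degree < (dg : ℕ))
    (hred : gcd (Finset.univ.gcd f) g = 1)
    (hgM : IsCoprime g M)
    -- `R i` is the CRT interpolant of row `i` of the received word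
    (R : Fin ℓ → F[X])
    -- `μ j` is the truncated valuation of error column `j`
    (μ : Fin n → ℕ)
    (hμ : ∀ j, μ j = min (lam j) (Finset.univ.inf' Finset.univ_nonempty
        (fun i => if g * R i - f i = 0 then lam j
          else rootMultiplicity (α j) (g * R i - f i))))
    (Λ : F[X]) (hΛ : Λ = ∏ j, (X - C (α j)) ^ (lam j - μ j))
    (hΛt : Λ.natDegree ≤ t) :
    ∀ (φ : F[X]) (ψ : Fin ℓ → F[X]),
      (∀ i, M ∣ (φ * R i - ψ i)) →
      φ.degree < (dg + t : ℕ) → (∀ i, (ψ i).degree < (df + t : ℕ)) →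
      ∃ p : F[X], φ = p * (Λ * g) ∧ ∀ i, ψ i = p * (Λ * f i) :=
  unique_decoding_general n ℓ α hα lam M hM L hL df dg t ht f g hg hdegf hdegg hred R μ hμ Λ hΛ hΛt
end

section
/- (Success of the SRF decoder given S_E = {0}.) Assume B := d_f + d_g + t − L − 2 < 0. With notation as in the SRFwE setup, let E be the error matrix with error locator Λ (deg Λ ≤ t), Y = M/Λ, E'_i = E_i/Y ∈ F_q[x]/Λ, and suppose gcd(E'_1,…,E'_ℓ, Λ) = 1. If the only φ ∈ F_q[x]/Λ such that deg((g·φ·E'_i) rem Λ) ≤ B + deg Λ for all i is φ = 0, then every solution (φ, ψ_1, …, ψ_ℓ) of the key equations ψ_i ≡ φ R_i mod M with deg φ < d_g + t, deg ψ_i < d_f + t lies in (Λg, Λf_1, …, Λf_ℓ)·F_q[x]. -/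
/-!
The cross terms `δᵢ = g ψᵢ - φ fᵢ` of a key-equation solution satisfy `δᵢ ≡ g φ Eᵢ (mod M)` and
have degree at most `B + L < L`. Since `M = Λ Y` and `Y ∣ Eᵢ`, also `Y ∣ δᵢ`, and `δᵢ / Y` is the
remainder of `g φ E'ᵢ` modulo `Λ`, of degree at most `B + deg Λ`; so `S_E = {0}` gives `Λ ∣ φ`.
Then `M ∣ δᵢ`, hence `δᵢ = 0`, and `g ψᵢ = φ fᵢ` together with `gcd(g, Λ) = gcd(f, g) = 1`
forces `φ = p Λ g`, `ψᵢ = p Λ fᵢ`.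
-/

open Polynomial

section DegLE

variable {F : Type*} [Field F] {p q : F[X]} {a b c : ℤ}

theorem degLE_iff : DegLE p c ↔ p = 0 ∨ (p.natDegree : ℤ) ≤ c := by
  rcases eq_or_ne p 0 with rfl | hp
  · simp [DegLE]
  · simp [DegLE, degree_eq_natDegree hp, hp]

theorem degLE_of_degree_lt {d : ℕ} (h : p.degree < d) : DegLE p (d - 1) := by
  rcases eq_or_ne p 0 with rfl | hp
  · exact degLE_iff.mpr (Or.inl rfl)
  · have := (natDegree_lt_iff_degree_lt hp).mpr h
    exact degLE_iff.mpr (Or.inr (by omega))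

theorem DegLE.mono (h : DegLE p a) (hab : a ≤ b) : DegLE p b :=
  degLE_iff.mpr ((degLE_iff.mp h).imp_right (·.trans hab))

theorem DegLE.mul (hp : DegLE p a) (hq : DegLE q b) : DegLE (p * q) (a + b) := by
  rw [degLE_iff] at *
  rcases hp with rfl | hp
  · simp
  rcases hq with rfl | hq
  · simp
  have := natDegree_mul_le (p := p) (q := q)
  omega

theorem DegLE.sub (hp : DegLE p c) (hq : DegLE q c) : DegLE (p - q) c := by
  rw [degLE_iff] at *
  rcases eq_or_ne (p - q) 0 with h | h
  · exact Or.inl h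
  refine Or.inr ?_
  rcases hp with rfl | hp <;> rcases hq with rfl | hq
  · simp at h
  · simpa using hq
  · simpa using hp
  · have := natDegree_sub_le p q
    omega

theorem DegLE.of_mul_left (hq : q ≠ 0) (h : DegLE (q * p) c) : DegLE p (c - q.natDegree) := by
  rw [degLE_iff] at *
  rcases eq_or_ne p 0 with rfl | hp
  · exact Or.inl rfl
  simp only [mul_eq_zero, hq, hp, or_self, false_or, natDegree_mul hq hp] at h
  push_cast at h
  exact Or.inr (by omega)

theorem DegLE.degree_lt (h : DegLE p c) (hq : q ≠ 0) (hc : c < q.natDegree) :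
    p.degree < q.degree := by
  rcases degLE_iff.mp h with rfl | hp
  · exact bot_lt_iff_ne_bot.mpr (degree_ne_bot.mpr hq)
  · rcases eq_or_ne p 0 with rfl | hp0
    · exact bot_lt_iff_ne_bot.mpr (degree_ne_bot.mpr hq)
    exact degree_lt_degree (by omega)

theorem DegLE.eq_zero_of_dvd (h : DegLE p c) (hqp : q ∣ p) (hc : c < q.natDegree) : p = 0 := by
  rcases eq_or_ne q 0 with rfl | hq
  · exact zero_dvd_iff.mp hqp
  · exact eq_zero_of_dvd_of_degree_lt hqp (h.degree_lt hq hc)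

end DegLE

theorem dvd_mul_sub_mul_sub_of_dvd {A : Type*} [CommRing A] {M g f R E φ ψ : A}
    (hRE : M ∣ g * R - f - g * E) (hkey : M ∣ φ * R - ψ) :
    M ∣ (g * ψ - φ * f) - g * φ * E := by
  convert dvd_sub (hRE.mul_left φ) (hkey.mul_left g) using 1
  ring

theorem degLE_mul_div_mod_of_mul_dvd_sub {F : Type*} [Field F] {Λ Y δ a E : F[X]} {c : ℤ}
    (hΛ : Λ ≠ 0) (hY : Y ≠ 0) (hYE : Y ∣ E) (h : Λ * Y ∣ δ - a * E)
    (hδ : DegLE δ (c + Λ.natDegree + Y.natDegree)) (hc : c < 0) :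
    DegLE ((a * (E / Y)) % Λ) (c + Λ.natDegree) := by
  obtain ⟨E', rfl⟩ := hYE
  have hYδ : Y ∣ δ := (dvd_sub_left (dvd_mul_of_dvd_right (dvd_mul_right Y E') a)).mp
    ((dvd_mul_left Y Λ).trans h)
  obtain ⟨ε, rfl⟩ := hYδ
  have hΛε : Λ ∣ ε - a * E' := by
    rw [show Y * ε - a * (Y * E') = Y * (ε - a * E') by ring, mul_comm Λ Y] at h
    exact (mul_dvd_mul_iff_left hY).mp h
  have hε : DegLE ε (c + Λ.natDegree) := by simpa using hδ.of_mul_left hY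
  rw [mul_div_cancel_left₀ _ hY, ← mod_eq_of_dvd_sub hΛε,
    (mod_eq_self_iff hΛ).mpr (hε.degree_lt hΛ (by omega))]
  exact hε

theorem dvd_of_forall_dvd_mul_of_gcd_eq_one_s13 {R ι : Type*} [CommRing R] [IsDomain R] [IsBezout R]
    [StrongNormalizedGCDMonoid R] {s : Finset ι} {f : ι → R} {g a : R}
    (h : gcd (s.gcd f) g = 1) (hd : ∀ i ∈ s, g ∣ a * f i) : g ∣ a := by
  have hcop : IsCoprime g (s.gcd f) := ((gcd_isUnit_iff _ _).mp (h ▸ isUnit_one)).symm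
  have : g ∣ s.gcd (fun i => a * f i) := Finset.dvd_gcd hd
  rw [Finset.gcd_mul_left] at this
  exact dvd_normalize_iff.mp (hcop.dvd_of_dvd_mul_right this)

theorem exists_eq_mul_of_mul_eq_mul_of_dvd {R ι : Type*} [CommRing R] [IsDomain R] [IsBezout R]
    [StrongNormalizedGCDMonoid R] [Fintype ι] {f ψ : ι → R} {g Λ φ : R} (hg : g ≠ 0)
    (hgΛ : IsCoprime g Λ) (hred : gcd (Finset.univ.gcd f) g = 1) (hΛφ : Λ ∣ φ)
    (hcross : ∀ i, g * ψ i = φ * f i) :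
    ∃ p, φ = p * (Λ * g) ∧ ∀ i, ψ i = p * (Λ * f i) := by
  obtain ⟨φ', rfl⟩ := hΛφ
  have hgφ' : g ∣ φ' := dvd_of_forall_dvd_mul_of_gcd_eq_one_s13 hred fun i _ =>
    hgΛ.dvd_of_dvd_mul_left ⟨ψ i, by rw [← mul_assoc, ← hcross i]⟩
  obtain ⟨p, rfl⟩ := hgφ'
  refine ⟨p, by ring, fun i => mul_left_cancel₀ hg ?_⟩
  linear_combination hcross i

theorem decoder_success_of_SE_trivial_general {F : Type*} [Field F] [DecidableEq F]
    (n ℓ : ℕ)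
    (α : Fin n → F)
    (lam : Fin n → ℕ)
    (M : F[X]) (hM : M = ∏ j, (X - C (α j)) ^ lam j)
    (L : ℕ) (hL : L = M.natDegree)
    (df dg t : ℕ)
    (B : ℤ) (hBdef : B = (df : ℤ) + dg + t - L - 2) (hB : B < 0)
    (f : Fin ℓ → F[X]) (g : F[X]) (hg : g ≠ 0)
    (hdegf : ∀ i, (f i).degree < (df : ℕ)) (hdegg : g.degree < (dg : ℕ))
    (hred : gcd (Finset.univ.gcd f) g = 1)
    (hgM : IsCoprime g M)
    (R E : Fin ℓ → F[X])
    -- received word `R = C + E`: `R_i ≡ f_i/g + E_i (mod M)`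
    (hRE : ∀ i, M ∣ (g * R i - f i - g * E i))
    (Λ : F[X]) (hΛdvd : Λ ∣ M)
    (Y : F[X]) (hY : Y = M / Λ)
    (hYE : ∀ i, Y ∣ E i)
    -- `S_E = {0}`
    (hSE : ∀ φ : F[X],
      (∀ i, DegLE ((g * φ * (E i / Y)) % Λ) (B + Λ.natDegree)) → Λ ∣ φ) :
    ∀ (φ : F[X]) (ψ : Fin ℓ → F[X]),
      (∀ i, M ∣ (φ * R i - ψ i)) →
      φ.degree < (dg + t : ℕ) → (∀ i, (ψ i).degree < (df + t : ℕ)) →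
      ∃ p : F[X], φ = p * (Λ * g) ∧ ∀ i, ψ i = p * (Λ * f i) := by
  intro φ ψ hkey hdegφ hdegψ
  have hM0 : M ≠ 0 := hM ▸ (monic_prod_of_monic _ _ fun j _ => (monic_X_sub_C (α j)).pow _).ne_zero
  have hΛ0 : Λ ≠ 0 := by
    rintro rfl
    exact hM0 (zero_dvd_iff.mp hΛdvd)
  have hMΛY : M = Λ * Y := hY ▸ (EuclideanDomain.mul_div_cancel' hΛ0 hΛdvd).symm
  have hY0 : Y ≠ 0 := right_ne_zero_of_mul (hMΛY ▸ hM0)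
  have hLΛY : (L : ℤ) = Λ.natDegree + Y.natDegree := by
    rw [hL, hMΛY, natDegree_mul hΛ0 hY0, Nat.cast_add]
  have hdefect (i) : M ∣ (g * ψ i - φ * f i) - g * φ * E i :=
    dvd_mul_sub_mul_sub_of_dvd (hRE i) (hkey i)
  have hcross_deg (i) : DegLE (g * ψ i - φ * f i) (B + L) :=
    (((degLE_of_degree_lt hdegg).mul (degLE_of_degree_lt (hdegψ i))).mono (by push_cast; omega)).sub
      (((degLE_of_degree_lt hdegφ).mul (degLE_of_degree_lt (hdegf i))).mono (by push_cast; omega))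
  have hΛφ : Λ ∣ φ := hSE φ fun i => degLE_mul_div_mod_of_mul_dvd_sub hΛ0 hY0 (hYE i)
    (hMΛY ▸ hdefect i) (by rw [add_assoc, ← hLΛY]; exact hcross_deg i) hB
  have hcross (i) : g * ψ i = φ * f i := by
    have hM_gφE : M ∣ g * φ * E i := hMΛY ▸ mul_dvd_mul (dvd_mul_of_dvd_right hΛφ g) (hYE i)
    refine sub_eq_zero.mp ((hcross_deg i).eq_zero_of_dvd ((dvd_sub_left hM_gφE).mp (hdefect i)) ?_)
    rw [← hL]
    omega
  exact exists_eq_mul_of_mul_eq_mul_of_dvd hg (hgM.of_isCoprime_of_dvd_right hΛdvd) hred hΛφ hcross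

/-- Success of the SRF decoder given `S_E = {0}`: with `B = d_f + d_g + t − L − 2 < 0`,
error locator `Λ` (`deg Λ ≤ t`), `Y = M/Λ` dividing each error interpolant `E_i`,
`gcd(E'_1,…,E'_ℓ,Λ) = 1`, and only `φ = 0` in `F_q[x]/Λ` satisfying
`deg((gφE'_i) rem Λ) ≤ B + deg Λ` for all `i`, every solution of the key equations lies in
`(Λg, Λf_1,…,Λf_ℓ)·F_q[x]`. -/
theorem decoder_success_of_SE_trivial {F : Type*} [Field F] [Fintype F] [DecidableEq F]
    (n ℓ : ℕ)
    (α : Fin n → F) (hα : Function.Injective α)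
    (lam : Fin n → ℕ) (hlam : ∀ j, 0 < lam j)
    (M : F[X]) (hM : M = ∏ j, (X - C (α j)) ^ lam j)
    (L : ℕ) (hL : L = M.natDegree)
    (df dg t : ℕ) (hdf : 0 < df) (hdg : 0 < dg) (hsum : df + dg ≤ L + 1)
    (B : ℤ) (hBdef : B = (df : ℤ) + dg + t - L - 2) (hB : B < 0)
    (f : Fin ℓ → F[X]) (g : F[X]) (hg : g ≠ 0)
    (hdegf : ∀ i, (f i).degree < (df : ℕ)) (hdegg : g.degree < (dg : ℕ))
    (hred : gcd (Finset.univ.gcd f) g = 1)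
    (hgM : IsCoprime g M)
    (R E : Fin ℓ → F[X])
    -- received word `R = C + E`: `R_i ≡ f_i/g + E_i (mod M)`
    (hRE : ∀ i, M ∣ (g * R i - f i - g * E i))
    (Λ : F[X]) (hΛdvd : Λ ∣ M) (hΛt : Λ.natDegree ≤ t)
    (Y : F[X]) (hY : Y = M / Λ)
    (hYE : ∀ i, Y ∣ E i)
    (hgcdE : gcd (Finset.univ.gcd (fun i => E i / Y)) Λ = 1)
    -- `S_E = {0}`
    (hSE : ∀ φ : F[X],
      (∀ i, DegLE ((g * φ * (E i / Y)) % Λ) (B + Λ.natDegree)) → Λ ∣ φ) :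
    ∀ (φ : F[X]) (ψ : Fin ℓ → F[X]),
      (∀ i, M ∣ (φ * R i - ψ i)) →
      φ.degree < (dg + t : ℕ) → (∀ i, (ψ i).degree < (df + t : ℕ)) →
      ∃ p : F[X], φ = p * (Λ * g) ∧ ∀ i, ψ i = p * (Λ * f i) :=
  decoder_success_of_SE_trivial_general n ℓ α lam M hM L hL df dg t B hBdef hB f g hg hdegf hdegg
    hred hgM R E hRE Λ hΛdvd Y hY hYE hSE
end

section
/- (Correctness of any output of the SRF-with-poles decoder.) Suppose (φ, ψ_1,…,ψ_ℓ) ∈ F_q[x]^{ℓ+1} is a nonzero solution of the key equations CRT_M((x−α_j)^{ϑ_j})·ψ_i ≡ φ·R_i mod M with deg φ < d_g + t and deg ψ_i < d_f + t. Let η = gcd(φ, ψ_1,…,ψ_ℓ), φ' = φ/η, ψ'_i = ψ_i/η, and assume deg η ≤ t, deg φ' < d_g, deg ψ'_i < d_f. Then the error locator Λ between Ev^∞(ψ'/φ') and R divides η, and hence d(Ev^∞(ψ'/φ'), R) = deg Λ ≤ t. -/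
/-!
Write `φ = η φ'` and `ψ_i = η ψ'_i`. Reducing the key equation modulo `(x - α_j)^{λ_j}` and
replacing `T` and `R_i` by their local values turns it into
`(x - α_j)^{λ_j} ∣ η · e_{i,j}`, with `e_{i,j}` the error column of `ψ'/φ'`. Hence the valuation
of `e_{i,j}` at `α_j` is at least `λ_j - ν_{α_j}(η)` for every `i`, i.e. each factor
`(x - α_j)^{λ_j - μ_j}` of `Λ` divides `η`; these factors are pairwise coprime, so `Λ ∣ η`.
-/

open Polynomial

theorem gcd_finset_univ_gcd_ne_zero {α ι : Type*} [CommMonoidWithZero α]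
    [NormalizedGCDMonoid α] [Fintype ι] {a : α} {f : ι → α} (h : a ≠ 0 ∨ ∃ i, f i ≠ 0) :
    gcd a (Finset.univ.gcd f) ≠ 0 := by
  rw [Ne, gcd_eq_zero_iff, Finset.gcd_eq_zero_iff]
  rintro ⟨ha, hf⟩
  rcases h with ha' | ⟨i, hi⟩
  · exact ha' ha
  · exact hi (hf i (Finset.mem_univ i))

theorem dvd_sub_of_dvd_key_equation {A : Type*} [CommRing A] {q T s R r φ ψ : A}
    (hkey : q ∣ T * ψ - φ * R) (hT : q ∣ T - s) (hR : q ∣ R - r) : q ∣ s * ψ - φ * r := by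
  have hsplit : s * ψ - φ * r = (T * ψ - φ * R) - (T - s) * ψ + φ * (R - r) := by ring
  rw [hsplit]
  exact (hkey.sub (hT.mul_right ψ)).add (hR.mul_left φ)

section RootMultiplicity

variable {A : Type*} [CommRing A] [IsDomain A]

theorem le_rootMultiplicity_add_of_pow_dvd_mul {p q : A[X]} {a : A} {k : ℕ} (hpq : p * q ≠ 0)
    (h : (X - C a) ^ k ∣ p * q) : k ≤ rootMultiplicity a p + rootMultiplicity a q := by
  rw [← rootMultiplicity_mul hpq]
  exact (le_rootMultiplicity_iff hpq).mpr h

/-- The right-hand side is the valuation at `a` of the column `e`, truncated at `k`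
(a zero entry counts as valuation `k`). -/
theorem sub_rootMultiplicity_le_truncated_valuation [DecidableEq A] {ι : Type*} {s : Finset ι}
    (hs : s.Nonempty) {p : A[X]} (hp : p ≠ 0) {e : ι → A[X]} {a : A} {k : ℕ}
    (h : ∀ i ∈ s, (X - C a) ^ k ∣ p * e i) :
    k - rootMultiplicity a p ≤
      min k (s.inf' hs fun i => if e i = 0 then k else rootMultiplicity a (e i)) := by
  refine le_min (Nat.sub_le _ _) (Finset.le_inf' _ _ fun i hi => ?_)
  split_ifs with he
  · exact Nat.sub_le _ _
  · have := le_rootMultiplicity_add_of_pow_dvd_mul (mul_ne_zero hp he) (h i hi)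
    omega

end RootMultiplicity

theorem prod_X_sub_C_pow_dvd {K ι : Type*} [Field K] [Fintype ι] {α : ι → K}
    (hα : Function.Injective α) {k : ι → ℕ} {p : K[X]} (h : ∀ j, (X - C (α j)) ^ k j ∣ p) :
    ∏ j, (X - C (α j)) ^ k j ∣ p :=
  Finset.prod_dvd_of_coprime (fun _ _ _ _ hab => (pairwise_coprime_X_sub_C hα hab).pow)
    fun j _ => h j

theorem decoder_output_correct_general {F : Type*} [Field F] [DecidableEq F]
    (n ℓ : ℕ) [NeZero ℓ]
    (α : Fin n → F) (hα : Function.Injective α)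
    (lam ϑ : Fin n → ℕ)
    (M : F[X]) (hM : M = ∏ j, (X - C (α j)) ^ lam j)
    (t : ℕ)
    -- the received reductions `r_{i,j}` (as lifts), reduced columns
    (r : Fin ℓ → Fin n → F[X])
    -- `R i` is the CRT interpolant of row `i`
    (R : Fin ℓ → F[X]) (hR : ∀ i j, (X - C (α j)) ^ lam j ∣ (R i - r i j))
    -- `T = CRT_M((x−α_j)^{ϑ_j})`
    (T : F[X]) (hT : ∀ j, (X - C (α j)) ^ lam j ∣ (T - (X - C (α j)) ^ ϑ j))
    -- a nonzero solution of the key equations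
    (φ : F[X]) (ψ : Fin ℓ → F[X]) (hnz : φ ≠ 0 ∨ ∃ i, ψ i ≠ 0)
    (hkey : ∀ i, M ∣ (T * ψ i - φ * R i))
    (η : F[X]) (hη : η = gcd φ (Finset.univ.gcd ψ))
    (hdegη : η.natDegree ≤ t)
    -- `μ j` is the truncated valuation of the error column between `Ev^∞(ψ'/φ')` and `R`
    (μ : Fin n → ℕ)
    (hμ : ∀ j, μ j = min (lam j) (Finset.univ.inf' Finset.univ_nonempty
        (fun i => if (X - C (α j)) ^ ϑ j * (ψ i / η) - (φ / η) * r i j = 0 then lam j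
          else rootMultiplicity (α j) ((X - C (α j)) ^ ϑ j * (ψ i / η) - (φ / η) * r i j))))
    (Λ : F[X]) (hΛ : Λ = ∏ j, (X - C (α j)) ^ (lam j - μ j)) :
    Λ ∣ η ∧ Λ.natDegree ≤ t := by
  have hη0 : η ≠ 0 := hη ▸ gcd_finset_univ_gcd_ne_zero hnz
  have hφ : η * (φ / η) = φ :=
    EuclideanDomain.mul_div_cancel' hη0 (hη ▸ gcd_dvd_left _ _)
  have hψ (i) : η * (ψ i / η) = ψ i :=
    EuclideanDomain.mul_div_cancel' hη0
      (hη ▸ (gcd_dvd_right _ _).trans (Finset.gcd_dvd (Finset.mem_univ i)))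
  have hlocal (j i) : (X - C (α j)) ^ lam j ∣
      η * ((X - C (α j)) ^ ϑ j * (ψ i / η) - (φ / η) * r i j) := by
    have hMj : (X - C (α j)) ^ lam j ∣ M := hM ▸ Finset.dvd_prod_of_mem _ (Finset.mem_univ j)
    have hfactor : η * ((X - C (α j)) ^ ϑ j * (ψ i / η) - (φ / η) * r i j) =
        (X - C (α j)) ^ ϑ j * ψ i - φ * r i j := by
      linear_combination (X - C (α j)) ^ ϑ j * hψ i - r i j * hφ
    rw [hfactor]
    exact dvd_sub_of_dvd_key_equation (hMj.trans (hkey i)) (hT j) (hR i j)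
  have hΛη : Λ ∣ η := hΛ ▸ prod_X_sub_C_pow_dvd hα fun j => by
    have := sub_rootMultiplicity_le_truncated_valuation Finset.univ_nonempty hη0
      fun i _ => hlocal j i
    rw [← hμ j] at this
    exact (pow_dvd_pow _ (by omega)).trans (pow_rootMultiplicity_dvd η (α j))
  exact ⟨hΛη, (natDegree_le_of_dvd hΛη hη0).trans hdegη⟩

/-- Correctness of any output of the SRF-with-poles decoder: if `(φ, ψ)` is a nonzero solution of
the key equations, `η = gcd(φ, ψ_1,…,ψ_ℓ)`, `φ' = φ/η`, `ψ'_i = ψ_i/η`, with `deg η ≤ t`,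
`deg φ' < d_g`, `deg ψ'_i < d_f`, then the error locator `Λ` between `Ev^∞(ψ'/φ')` and the
received word divides `η`, and hence `d(Ev^∞(ψ'/φ'), R) = deg Λ ≤ t`. -/
theorem decoder_output_correct {F : Type*} [Field F] [Fintype F] [DecidableEq F]
    (n ℓ : ℕ) [NeZero ℓ]
    (α : Fin n → F) (hα : Function.Injective α)
    (lam ϑ : Fin n → ℕ) (hlam : ∀ j, 0 < lam j) (hϑ : ∀ j, ϑ j ≤ lam j)
    (M : F[X]) (hM : M = ∏ j, (X - C (α j)) ^ lam j)
    (df dg t : ℕ) (hdf : 0 < df) (hdg : 0 < dg)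
    -- the received reductions `r_{i,j}` (as lifts), reduced columns
    (r : Fin ℓ → Fin n → F[X])
    (hreduced : ∀ j, 0 < ϑ j → ∃ i, ¬ (X - C (α j)) ∣ r i j)
    -- `R i` is the CRT interpolant of row `i`
    (R : Fin ℓ → F[X]) (hR : ∀ i j, (X - C (α j)) ^ lam j ∣ (R i - r i j))
    -- `T = CRT_M((x−α_j)^{ϑ_j})`
    (T : F[X]) (hT : ∀ j, (X - C (α j)) ^ lam j ∣ (T - (X - C (α j)) ^ ϑ j))
    -- a nonzero solution of the key equations
    (φ : F[X]) (ψ : Fin ℓ → F[X]) (hnz : φ ≠ 0 ∨ ∃ i, ψ i ≠ 0)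
    (hkey : ∀ i, M ∣ (T * ψ i - φ * R i))
    (hdegφ : φ.degree < (dg + t : ℕ)) (hdegψ : ∀ i, (ψ i).degree < (df + t : ℕ))
    (η : F[X]) (hη : η = gcd φ (Finset.univ.gcd ψ))
    (hdegη : η.natDegree ≤ t)
    (hdegφ' : (φ / η).degree < (dg : ℕ)) (hdegψ' : ∀ i, (ψ i / η).degree < (df : ℕ))
    -- `μ j` is the truncated valuation of the error column between `Ev^∞(ψ'/φ')` and `R`
    (μ : Fin n → ℕ)
    (hμ : ∀ j, μ j = min (lam j) (Finset.univ.inf' Finset.univ_nonempty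
        (fun i => if (X - C (α j)) ^ ϑ j * (ψ i / η) - (φ / η) * r i j = 0 then lam j
          else rootMultiplicity (α j) ((X - C (α j)) ^ ϑ j * (ψ i / η) - (φ / η) * r i j))))
    (Λ : F[X]) (hΛ : Λ = ∏ j, (X - C (α j)) ^ (lam j - μ j)) :
    Λ ∣ η ∧ Λ.natDegree ≤ t :=
  decoder_output_correct_general n ℓ α hα lam ϑ M hM t r R hR T hT φ ψ hnz hkey η hη hdegη μ hμ Λ hΛ
end
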